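/- On ℝ³ with coordinates (y,z,p), let s₁ = τ₁ + y²τ₂, s₂ = τ₂, s₃ = τ₃ − 2y τ₂, where τ₁ = dy + y dz, τ₂ = −(dp − p dz), τ₃ = −dz. Set A = −(s₁ + s₂), B = s₁ − s₂, C = −s₃. Then (A, B, C) satisfies the same structure equations as the triple (σ₁, σ₂, σ₃), namely dA = −B∧C, dB = −A∧C, dC = A∧B at every point of ℝ³. (This is the Lie-algebra isomorphism {σ₁,σ₂,σ₃} ≅ {−(s₁+s₂), s₁−s₂, −s₃} identifying the two rolling Pfaffian systems.) -/

import Mathlib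

/-!
The coframe `τ` satisfies `dτ₁ = τ₃ ∧ τ₁`, `dτ₂ = τ₂ ∧ τ₃`, `dτ₃ = 0`. Since `dy = τ₁ + y τ₃`,
the Leibniz rule turns these into the `𝔰𝔩₂` relations `ds₁ = s₃ ∧ s₁`, `ds₂ = s₂ ∧ s₃`,
`ds₃ = -2 s₁ ∧ s₂`. Finally `(A, B, C)` is a constant change of basis of `(s₁, s₂, s₃)`, so
the structure equations follow from linearity of `d` and bilinearity of `∧`.
-/

noncomputable section

/-- the coordinate differentials dy, dz, dp on ℝ³ with coordinates (y,z,p) -/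
def dc (i : Fin 3) : (Fin 3 → ℝ) →L[ℝ] ℝ := ContinuousLinearMap.proj i

/-- exterior derivative of a 1-form -/
def extd {n : ℕ} (ω : (Fin n → ℝ) → ((Fin n → ℝ) →L[ℝ] ℝ)) :
    (Fin n → ℝ) → (Fin n → ℝ) → (Fin n → ℝ) → ℝ :=
  fun a u v => fderiv ℝ (fun x => ω x v) a u - fderiv ℝ (fun x => ω x u) a v

/-- wedge product of two 1-forms -/
def wedge {n : ℕ} (ω η : (Fin n → ℝ) → ((Fin n → ℝ) →L[ℝ] ℝ)) :
    (Fin n → ℝ) → (Fin n → ℝ) → (Fin n → ℝ) → ℝ :=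
  fun a u v => ω a u * η a v - ω a v * η a u

/-- τ₁ = dy + y dz -/
def τ₁ : (Fin 3 → ℝ) → ((Fin 3 → ℝ) →L[ℝ] ℝ) := fun a => dc 0 + a 0 • dc 1

/-- τ₂ = −(dp − p dz) -/
def τ₂ : (Fin 3 → ℝ) → ((Fin 3 → ℝ) →L[ℝ] ℝ) := fun a => -(dc 2 - a 2 • dc 1)

/-- τ₃ = −dz -/
def τ₃ : (Fin 3 → ℝ) → ((Fin 3 → ℝ) →L[ℝ] ℝ) := fun _ => -dc 1

/-- s₁ = τ₁ + y²τ₂ -/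
def s₁ : (Fin 3 → ℝ) → ((Fin 3 → ℝ) →L[ℝ] ℝ) := fun a => τ₁ a + (a 0)^2 • τ₂ a

/-- s₂ = τ₂ -/
def s₂ : (Fin 3 → ℝ) → ((Fin 3 → ℝ) →L[ℝ] ℝ) := τ₂

/-- s₃ = τ₃ − 2y τ₂ -/
def s₃ : (Fin 3 → ℝ) → ((Fin 3 → ℝ) →L[ℝ] ℝ) := fun a => τ₃ a - (2 * a 0) • τ₂ a

/-- A = −(s₁ + s₂) -/
def A : (Fin 3 → ℝ) → ((Fin 3 → ℝ) →L[ℝ] ℝ) := fun a => -(s₁ a + s₂ a)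

/-- B = s₁ − s₂ -/
def B : (Fin 3 → ℝ) → ((Fin 3 → ℝ) →L[ℝ] ℝ) := fun a => s₁ a - s₂ a

/-- C = −s₃ -/
def C : (Fin 3 → ℝ) → ((Fin 3 → ℝ) →L[ℝ] ℝ) := fun a => -s₃ a

section ExteriorDerivative

variable {n : ℕ} {ω η : (Fin n → ℝ) → ((Fin n → ℝ) →L[ℝ] ℝ)} {a : Fin n → ℝ}

theorem extd_eq_fderiv (hω : DifferentiableAt ℝ ω a) (u v : Fin n → ℝ) :
    extd ω a u v = fderiv ℝ ω a u v - fderiv ℝ ω a v u := by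
  simp [extd, fderiv_clm_apply hω (differentiableAt_const _)]

theorem extd_const (φ : (Fin n → ℝ) →L[ℝ] ℝ) (a u v : Fin n → ℝ) :
    extd (fun _ => φ) a u v = 0 := by
  simp [extd]

theorem extd_neg (ω : (Fin n → ℝ) → ((Fin n → ℝ) →L[ℝ] ℝ)) (a u v : Fin n → ℝ) :
    extd (fun x => -ω x) a u v = -extd ω a u v := by
  simp only [extd, neg_apply]
  rw [fderiv_fun_neg, fderiv_fun_neg]
  simp only [neg_apply]
  ring

theorem extd_add (hω : DifferentiableAt ℝ ω a) (hη : DifferentiableAt ℝ η a)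
    (u v : Fin n → ℝ) :
    extd (fun x => ω x + η x) a u v = extd ω a u v + extd η a u v := by
  rw [extd_eq_fderiv (hω.fun_add hη), extd_eq_fderiv hω, extd_eq_fderiv hη,
    fderiv_fun_add hω hη]
  simp only [add_apply]
  ring

theorem extd_sub (hω : DifferentiableAt ℝ ω a) (hη : DifferentiableAt ℝ η a)
    (u v : Fin n → ℝ) :
    extd (fun x => ω x - η x) a u v = extd ω a u v - extd η a u v := by
  rw [extd_eq_fderiv (hω.fun_sub hη), extd_eq_fderiv hω, extd_eq_fderiv hη,
    fderiv_fun_sub hω hη]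
  simp only [sub_apply]
  ring

theorem extd_smul {f : (Fin n → ℝ) → ℝ} {f' : (Fin n → ℝ) →L[ℝ] ℝ} (hf : HasFDerivAt f f' a)
    (hω : DifferentiableAt ℝ ω a) (u v : Fin n → ℝ) :
    extd (fun x => f x • ω x) a u v = wedge (fun _ => f') ω a u v + f a * extd ω a u v := by
  have hfω := hf.fun_smul hω.hasFDerivAt
  rw [extd_eq_fderiv hfω.differentiableAt, extd_eq_fderiv hω, hfω.fderiv]
  simp only [wedge, add_apply, smul_apply, ContinuousLinearMap.smulRight_apply, smul_eq_mul]
  ring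

end ExteriorDerivative

@[fun_prop]
theorem differentiable_τ₁ : Differentiable ℝ τ₁ := by unfold τ₁; fun_prop

@[fun_prop]
theorem differentiable_τ₂ : Differentiable ℝ τ₂ := by unfold τ₂; fun_prop

@[fun_prop]
theorem differentiable_τ₃ : Differentiable ℝ τ₃ := by unfold τ₃; fun_prop

@[fun_prop]
theorem differentiable_s₁ : Differentiable ℝ s₁ := by unfold s₁; fun_prop

@[fun_prop]
theorem differentiable_s₂ : Differentiable ℝ s₂ := differentiable_τ₂

@[fun_prop]
theorem differentiable_s₃ : Differentiable ℝ s₃ := by unfold s₃; fun_prop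

theorem dc_apply (i : Fin 3) (v : Fin 3 → ℝ) : dc i v = v i := rfl

theorem extd_τ₁ (a u v : Fin 3 → ℝ) : extd τ₁ a u v = wedge τ₃ τ₁ a u v := by
  unfold τ₁
  rw [extd_add (by fun_prop) (by fun_prop), extd_const,
    extd_smul (hasFDerivAt_apply 0 a) (by fun_prop), extd_const]
  simp only [wedge, τ₃, neg_apply, add_apply, smul_apply, smul_eq_mul, dc_apply,
    ContinuousLinearMap.proj_apply]
  ring

theorem extd_τ₂ (a u v : Fin 3 → ℝ) : extd τ₂ a u v = wedge τ₂ τ₃ a u v := by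
  unfold τ₂
  rw [extd_neg, extd_sub (by fun_prop) (by fun_prop), extd_const,
    extd_smul (hasFDerivAt_apply 2 a) (by fun_prop), extd_const]
  simp only [wedge, τ₃, neg_apply, sub_apply, smul_apply, smul_eq_mul, dc_apply,
    ContinuousLinearMap.proj_apply]
  ring

theorem extd_τ₃ (a u v : Fin 3 → ℝ) : extd τ₃ a u v = 0 := extd_const _ a u v

theorem extd_s₁ (a u v : Fin 3 → ℝ) : extd s₁ a u v = wedge s₃ s₁ a u v := by
  unfold s₁
  rw [extd_add (by fun_prop) (by fun_prop),
    extd_smul ((hasFDerivAt_apply 0 a).pow 2) (by fun_prop), extd_τ₁, extd_τ₂]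
  simp only [wedge, s₃, τ₁, τ₂, τ₃, neg_apply, add_apply, sub_apply, smul_apply, smul_eq_mul,
    dc_apply, ContinuousLinearMap.proj_apply]
  ring

theorem extd_s₂ (a u v : Fin 3 → ℝ) : extd s₂ a u v = wedge s₂ s₃ a u v := by
  rw [s₂, extd_τ₂]
  simp only [wedge, s₃, sub_apply, smul_apply, smul_eq_mul]
  ring

theorem extd_s₃ (a u v : Fin 3 → ℝ) : extd s₃ a u v = -2 * wedge s₁ s₂ a u v := by
  unfold s₃
  rw [extd_sub (by fun_prop) (by fun_prop),
    extd_smul ((hasFDerivAt_apply 0 a).const_mul 2) (by fun_prop), extd_τ₃, extd_τ₂]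
  simp only [wedge, s₁, s₂, τ₁, τ₂, τ₃, neg_apply, add_apply, sub_apply, smul_apply, smul_eq_mul,
    dc_apply, ContinuousLinearMap.proj_apply]
  ring

theorem sl2_isomorphic_coframe_structure_equations :
    ∀ (a u v : Fin 3 → ℝ),
      extd A a u v = -(wedge B C a u v) ∧
      extd B a u v = -(wedge A C a u v) ∧
      extd C a u v = wedge A B a u v := by
  intro a u v
  unfold A B C
  rw [extd_neg, extd_add (by fun_prop) (by fun_prop), extd_sub (by fun_prop) (by fun_prop),
    extd_neg, extd_s₁, extd_s₂, extd_s₃]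
  simp only [wedge, neg_apply, add_apply, sub_apply]
  refine ⟨by ring, by ring, by ring⟩

end
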